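/- Fix d > 0, α₁, α₂ ∈ ℝ and k > 0 with cos(2 k d) ≠ 0 and D := (α₁ α₂ − k²) sin(2 k d) + k (α₁ + α₂) cos(2 k d) ≠ 0. For u, u′ ∈ [−d, d] define g(u, u′) := (1/(2 k d²)) [ sin(k(2d − |u − u′|))/cos(2kd) − ( k(α₁ − α₂) sin(k(u + u′)) − (α₁ α₂ + k²) cos(k(u + u′)) ) / D − (α₁ α₂ − k²) cos(k(u − u′)) / (cos(2kd) · D) ]. Then for every fixed u′ ∈ (−d, d): (i) u ↦ g(u, u′) is continuous on [−d, d] and twice continuously differentiable on [−d, u′) and on (u′, d]; (ii) −∂²g/∂u²(u, u′) = k² g(u, u′) for all u ≠ u′; (iii) g satisfies the Robin boundary conditions ∂g/∂u(d, u′) + α₁ g(d, u′) = 0 and −∂g/∂u(−d, u′) + α₂ g(−d, u′) = 0; (iv) the u-derivative has the jump lim_{u↓u′} ∂g/∂u(u, u′) − lim_{u↑u′} ∂g/∂u(u, u′) = −1/d². (These properties identify g as the integral kernel of the resolvent (h_{α₁,α₂} − k²)^{−1} of the Robin Laplacian on (−d,d).) -/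

import Mathlib

/-!
On each side of `u'` the kernel agrees with a smooth branch, obtained by replacing `|u - u'|`
by `±(u - u')`. Each branch is a combination of `sin` and `cos` of `k u + const`, hence solves
`-φ'' = k² φ`, and only the first term contributes to the jump of the derivative at `u'`:
`-2k cos(2kd) / (2kd² cos(2kd)) = -1/d²`. The Robin condition at `d` is a trigonometric identity
once `2kd` is split as `k(d + u') + k(d - u')`; the condition at `-d` is the one at `d` for the
kernel reflected by `u ↦ -u`, which exchanges `α₁` and `α₂`.
-/

open Filter Topology

/-- The denominator `D = (α₁α₂ − k²) sin(2kd) + k(α₁+α₂) cos(2kd)`. -/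
noncomputable def Dden (d α₁ α₂ k : ℝ) : ℝ :=
  (α₁ * α₂ - k ^ 2) * Real.sin (2 * k * d) + k * (α₁ + α₂) * Real.cos (2 * k * d)

/-- The integral kernel of the resolvent `(h_{α₁,α₂} − k²)⁻¹` of the Robin Laplacian
on `(−d,d)`. -/
noncomputable def gker (d α₁ α₂ k u u' : ℝ) : ℝ :=
  (1 / (2 * k * d ^ 2)) *
    (Real.sin (k * (2 * d - |u - u'|)) / Real.cos (2 * k * d)
      - (k * (α₁ - α₂) * Real.sin (k * (u + u'))
          - (α₁ * α₂ + k ^ 2) * Real.cos (k * (u + u'))) / Dden d α₁ α₂ k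
      - (α₁ * α₂ - k ^ 2) * Real.cos (k * (u - u'))
          / (Real.cos (2 * k * d) * Dden d α₁ α₂ k))

section

variable {d α₁ α₂ k u' s : ℝ}

theorem Dden_comm : Dden d α₁ α₂ k = Dden d α₂ α₁ k := by
  simp only [Dden]; ring

noncomputable def gkerBranch (d α₁ α₂ k u' s u : ℝ) : ℝ :=
  (1 / (2 * k * d ^ 2)) *
    (Real.sin (k * (2 * d - s * (u - u'))) / Real.cos (2 * k * d)
      - (k * (α₁ - α₂) * Real.sin (k * (u + u'))
          - (α₁ * α₂ + k ^ 2) * Real.cos (k * (u + u'))) / Dden d α₁ α₂ k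
      - (α₁ * α₂ - k ^ 2) * Real.cos (k * (u - u'))
          / (Real.cos (2 * k * d) * Dden d α₁ α₂ k))

noncomputable def gkerBranchDeriv (d α₁ α₂ k u' s u : ℝ) : ℝ :=
  (1 / (2 * k * d ^ 2)) *
    (-(k * s) * Real.cos (k * (2 * d - s * (u - u'))) / Real.cos (2 * k * d)
      - (k ^ 2 * (α₁ - α₂) * Real.cos (k * (u + u'))
          + k * (α₁ * α₂ + k ^ 2) * Real.sin (k * (u + u'))) / Dden d α₁ α₂ k
      + k * (α₁ * α₂ - k ^ 2) * Real.sin (k * (u - u'))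
          / (Real.cos (2 * k * d) * Dden d α₁ α₂ k))

theorem continuous_gker : Continuous (gker d α₁ α₂ k · u') := by
  unfold gker; fun_prop

theorem gker_eq_gkerBranch {u : ℝ} (hs : |s| = 1) (hu : 0 ≤ s * (u - u')) :
    gker d α₁ α₂ k u u' = gkerBranch d α₁ α₂ k u' s u := by
  have : |u - u'| = s * (u - u') := by rw [← abs_of_nonneg hu, abs_mul, hs, one_mul]
  rw [gker, gkerBranch, this]

theorem gker_eventuallyEq_gkerBranch {v : ℝ} (hs : |s| = 1) (hv : 0 < s * (v - u')) :
    (gker d α₁ α₂ k · u') =ᶠ[𝓝 v] gkerBranch d α₁ α₂ k u' s := by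
  have : ContinuousAt (fun u => s * (u - u')) v := by fun_prop
  filter_upwards [this.eventually (lt_mem_nhds hv)] with u hu using gker_eq_gkerBranch hs hu.le

theorem contDiff_gkerBranch {n : WithTop ℕ∞} : ContDiff ℝ n (gkerBranch d α₁ α₂ k u' s) := by
  unfold gkerBranch; fun_prop

theorem hasDerivAt_gkerBranch_args (u : ℝ) :
    HasDerivAt (fun v => k * (2 * d - s * (v - u'))) (-(k * s)) u ∧
      HasDerivAt (fun v => k * (v + u')) k u ∧ HasDerivAt (fun v => k * (v - u')) k u :=
  ⟨by simpa using
      ((((hasDerivAt_id u).sub_const u').const_mul s).const_sub (2 * d)).const_mul k,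
    by simpa using ((hasDerivAt_id u).add_const u').const_mul k,
    by simpa using ((hasDerivAt_id u).sub_const u').const_mul k⟩

theorem hasDerivAt_gkerBranch (u : ℝ) :
    HasDerivAt (gkerBranch d α₁ α₂ k u' s) (gkerBranchDeriv d α₁ α₂ k u' s u) u := by
  obtain ⟨h₁, h₂, h₃⟩ := hasDerivAt_gkerBranch_args (d := d) (s := s) (k := k) (u' := u') u
  refine HasDerivAt.congr_deriv
    (((h₁.sin.div_const (Real.cos (2 * k * d))).sub
      (((h₂.sin.const_mul (k * (α₁ - α₂))).sub
        (h₂.cos.const_mul (α₁ * α₂ + k ^ 2))).div_const (Dden d α₁ α₂ k)) |>.sub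
      ((h₃.cos.const_mul (α₁ * α₂ - k ^ 2)).div_const
        (Real.cos (2 * k * d) * Dden d α₁ α₂ k))).const_mul (1 / (2 * k * d ^ 2))) ?_
  simp only [gkerBranchDeriv]
  ring

theorem hasDerivAt_gkerBranchDeriv (hs : s ^ 2 = 1) (u : ℝ) :
    HasDerivAt (gkerBranchDeriv d α₁ α₂ k u' s) (-(k ^ 2 * gkerBranch d α₁ α₂ k u' s u)) u := by
  obtain ⟨h₁, h₂, h₃⟩ := hasDerivAt_gkerBranch_args (d := d) (s := s) (k := k) (u' := u') u
  refine HasDerivAt.congr_deriv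
    ((((h₁.cos.const_mul (-(k * s))).div_const (Real.cos (2 * k * d))).sub
      (((h₂.cos.const_mul (k ^ 2 * (α₁ - α₂))).add
        (h₂.sin.const_mul (k * (α₁ * α₂ + k ^ 2)))).div_const (Dden d α₁ α₂ k)) |>.add
      ((h₃.sin.const_mul (k * (α₁ * α₂ - k ^ 2))).div_const
        (Real.cos (2 * k * d) * Dden d α₁ α₂ k))).const_mul (1 / (2 * k * d ^ 2))) ?_
  simp only [gkerBranch]
  linear_combination -(1 / (2 * k * d ^ 2)) * k ^ 2 * Real.sin (k * (2 * d - s * (u - u')))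
    / Real.cos (2 * k * d) * hs

theorem deriv_gker_eventuallyEq {v : ℝ} (hs : |s| = 1) (hv : 0 < s * (v - u')) :
    deriv (gker d α₁ α₂ k · u') =ᶠ[𝓝 v] gkerBranchDeriv d α₁ α₂ k u' s := by
  filter_upwards [(gker_eventuallyEq_gkerBranch hs hv).deriv] with u hu
  rw [hu, (hasDerivAt_gkerBranch u).deriv]

theorem deriv_deriv_gker {v : ℝ} (hs : |s| = 1) (hv : 0 < s * (v - u')) :
    deriv (deriv (gker d α₁ α₂ k · u')) v = -(k ^ 2 * gker d α₁ α₂ k v u') := by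
  rw [(deriv_gker_eventuallyEq hs hv).deriv_eq,
    (hasDerivAt_gkerBranchDeriv (by rw [← sq_abs, hs, one_pow]) v).deriv,
    gker_eq_gkerBranch hs hv.le]

theorem tendsto_deriv_gker {S : Set ℝ} (hs : |s| = 1) (hS : ∀ v ∈ S, 0 < s * (v - u')) :
    Tendsto (deriv (gker d α₁ α₂ k · u')) (𝓝[S] u')
      (𝓝 (gkerBranchDeriv d α₁ α₂ k u' s u')) := by
  have hs2 : s ^ 2 = 1 := by rw [← sq_abs, hs, one_pow]
  refine ((hasDerivAt_gkerBranchDeriv hs2 u').continuousAt.tendsto.mono_left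
    nhdsWithin_le_nhds).congr' ?_
  filter_upwards [self_mem_nhdsWithin] with v hv
  exact ((deriv_gker_eventuallyEq hs (hS v hv)).eq_of_nhds).symm

theorem gkerBranchDeriv_jump (hk : k ≠ 0) (hcos : Real.cos (2 * k * d) ≠ 0) :
    gkerBranchDeriv d α₁ α₂ k u' 1 u' - gkerBranchDeriv d α₁ α₂ k u' (-1) u' =
      -1 / d ^ 2 := by
  simp only [gkerBranchDeriv, sub_self, mul_zero, sub_zero]
  field_simp
  ring

theorem gkerBranch_reflect (u : ℝ) :
    gkerBranch d α₁ α₂ k u' (-1) (-u) = gkerBranch d α₂ α₁ k (-u') 1 u := by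
  rw [gkerBranch, gkerBranch, ← Dden_comm, show k * (-u + u') = -(k * (u - u')) by ring,
    show k * (-u - u') = -(k * (u + u')) by ring, Real.sin_neg, Real.cos_neg, Real.cos_neg]
  ring_nf

theorem gkerBranchDeriv_reflect (u : ℝ) :
    gkerBranchDeriv d α₁ α₂ k u' (-1) (-u) = -gkerBranchDeriv d α₂ α₁ k (-u') 1 u := by
  have h := (hasDerivAt_gkerBranch (d := d) (α₁ := α₁) (α₂ := α₂) (k := k) (u' := u')
    (s := -1) (-u)).comp u (hasDerivAt_neg u)
  rw [show gkerBranch d α₁ α₂ k u' (-1) ∘ Neg.neg = gkerBranch d α₂ α₁ k (-u') 1 from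
    funext gkerBranch_reflect] at h
  rw [(hasDerivAt_gkerBranch u).unique h]
  ring

theorem gkerBranch_robin_right (hcos : Real.cos (2 * k * d) ≠ 0) (hD : Dden d α₁ α₂ k ≠ 0) :
    gkerBranchDeriv d α₁ α₂ k u' 1 d + α₁ * gkerBranch d α₁ α₂ k u' 1 d = 0 := by
  rw [gkerBranchDeriv, gkerBranch, show k * (2 * d - 1 * (d - u')) = k * (d + u') by ring]
  field_simp
  rw [Dden, show 2 * k * d = k * (d + u') + k * (d - u') by ring, Real.sin_add, Real.cos_add]
  linear_combination (α₁ * α₂ - k ^ 2)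
    * (α₁ * Real.cos (k * (d - u')) - k * Real.sin (k * (d - u'))) / (k * d ^ 2)
    * Real.sin_sq_add_cos_sq (k * (d + u'))

theorem gkerBranch_robin_left (hcos : Real.cos (2 * k * d) ≠ 0) (hD : Dden d α₁ α₂ k ≠ 0) :
    -gkerBranchDeriv d α₁ α₂ k u' (-1) (-d) + α₂ * gkerBranch d α₁ α₂ k u' (-1) (-d) = 0 := by
  rw [gkerBranchDeriv_reflect, gkerBranch_reflect, neg_neg]
  exact gkerBranch_robin_right hcos (Dden_comm ▸ hD)

def RobinBC (d α₁ α₂ : ℝ) (φ : ℝ → ℝ) : Prop :=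
  deriv φ d + α₁ * φ d = 0 ∧ -deriv φ (-d) + α₂ * φ (-d) = 0

theorem robinBC_gker (hu' : u' ∈ Set.Ioo (-d) d) (hcos : Real.cos (2 * k * d) ≠ 0)
    (hD : Dden d α₁ α₂ k ≠ 0) : RobinBC d α₁ α₂ (gker d α₁ α₂ k · u') := by
  have hright : 0 < (1 : ℝ) * (d - u') := by linarith [hu'.2]
  have hleft : 0 < (-1 : ℝ) * (-d - u') := by linarith [hu'.1]
  constructor <;> beta_reduce
  · rw [(deriv_gker_eventuallyEq (by norm_num) hright).eq_of_nhds,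
      gker_eq_gkerBranch (by norm_num) hright.le]
    exact gkerBranch_robin_right hcos hD
  · rw [(deriv_gker_eventuallyEq (by norm_num) hleft).eq_of_nhds,
      gker_eq_gkerBranch (by norm_num) hleft.le]
    exact gkerBranch_robin_left hcos hD

end

theorem robin_resolvent_kernel_properties_general
    (d α₁ α₂ k : ℝ) (hk : 0 < k)
    (hcos : Real.cos (2 * k * d) ≠ 0) (hD : Dden d α₁ α₂ k ≠ 0)
    (u' : ℝ) (hu' : u' ∈ Set.Ioo (-d) d)
    (G : ℝ → ℝ) (hG : ∀ u : ℝ, G u = gker d α₁ α₂ k u u') :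
    (ContinuousOn G (Set.Icc (-d) d) ∧
      ContDiffOn ℝ 2 G (Set.Ico (-d) u') ∧
      ContDiffOn ℝ 2 G (Set.Ioc u' d)) ∧
    (∀ u ∈ Set.Ioo (-d) d, u ≠ u' → deriv (deriv G) u = -(k ^ 2 * G u)) ∧
    (deriv G d + α₁ * G d = 0 ∧ -deriv G (-d) + α₂ * G (-d) = 0) ∧
    (∃ Lp Lm : ℝ,
      Tendsto (deriv G) (𝓝[>] u') (𝓝 Lp) ∧
      Tendsto (deriv G) (𝓝[<] u') (𝓝 Lm) ∧
      Lp - Lm = -1 / d ^ 2) := by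
  obtain rfl : G = (gker d α₁ α₂ k · u') := funext hG
  have right {v : ℝ} (hv : u' < v) : 0 < (1 : ℝ) * (v - u') := by linarith
  have left {v : ℝ} (hv : v < u') : 0 < (-1 : ℝ) * (v - u') := by linarith
  have habs1 : |(1 : ℝ)| = 1 := abs_one
  have habs2 : |(-1 : ℝ)| = 1 := by norm_num
  refine ⟨⟨continuous_gker.continuousOn, ?_, ?_⟩, ?_, robinBC_gker hu' hcos hD, _, _,
    tendsto_deriv_gker habs1 fun v => right, tendsto_deriv_gker habs2 fun v => left,
    gkerBranchDeriv_jump hk.ne' hcos⟩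
  · exact contDiff_gkerBranch.contDiffOn.congr fun v hv =>
      gker_eq_gkerBranch habs2 (by linarith [hv.2])
  · exact contDiff_gkerBranch.contDiffOn.congr fun v hv =>
      gker_eq_gkerBranch habs1 (by linarith [hv.1])
  · intro u _ hne
    rcases hne.lt_or_gt with h | h
    · exact deriv_deriv_gker habs2 (left h)
    · exact deriv_deriv_gker habs1 (right h)

/-- The explicit kernel `g(u,u′)` is the Green function of the Robin
Laplacian on `(−d,d)` at energy `k²`: it is continuous, solves `−g″ = k²g` away from
`u′`, satisfies the Robin boundary conditions at `±d`, and its `u`-derivative has a jump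
of size `−1/d²` across `u = u′`. -/
theorem robin_resolvent_kernel_properties
    (d α₁ α₂ k : ℝ) (hd : 0 < d) (hk : 0 < k)
    (hcos : Real.cos (2 * k * d) ≠ 0) (hD : Dden d α₁ α₂ k ≠ 0)
    (u' : ℝ) (hu' : u' ∈ Set.Ioo (-d) d)
    (G : ℝ → ℝ) (hG : ∀ u : ℝ, G u = gker d α₁ α₂ k u u') :
    (ContinuousOn G (Set.Icc (-d) d) ∧
      ContDiffOn ℝ 2 G (Set.Ico (-d) u') ∧
      ContDiffOn ℝ 2 G (Set.Ioc u' d)) ∧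
    (∀ u ∈ Set.Ioo (-d) d, u ≠ u' → deriv (deriv G) u = -(k ^ 2 * G u)) ∧
    (deriv G d + α₁ * G d = 0 ∧ -deriv G (-d) + α₂ * G (-d) = 0) ∧
    (∃ Lp Lm : ℝ,
      Tendsto (deriv G) (𝓝[>] u') (𝓝 Lp) ∧
      Tendsto (deriv G) (𝓝[<] u') (𝓝 Lm) ∧
      Lp - Lm = -1 / d ^ 2) :=
  robin_resolvent_kernel_properties_general d α₁ α₂ k hk hcos hD u' hu' G hG
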